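/- arXiv:2006.00970 — 3 statements merged into one kernel-verified Lean document; each statement's English description precedes it below -/
import Mathlib

section
/- Let G be an LWF chain graph with vertex set V, let P be a joint probability distribution over random variables indexed by V that satisfies the global Markov property with respect to G, and let T ∈ V. Then under P, the variable T is conditionally independent of the variables V∖({T}∪Mb(T)) given the variables Mb(T). -/
/- Formalization of LWF chain graphs, routes, sections, c-separation,
   minimal complexes, Markov blankets, moral graphs, and ancestral sets. -/

namespace LWF

/-- An LWF chain graph: a mixed graph with directed edges `dir` and (symmetric)
undirected edges `undir`, no loops, no pair of vertices joined by more than one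
edge, and no partially directed cycles. -/
structure ChainGraph (V : Type*) where
  dir : V → V → Prop
  undir : V → V → Prop
  undir_symm : ∀ u v, undir u v → undir v u
  dir_irrefl : ∀ v, ¬ dir v v
  undir_irrefl : ∀ v, ¬ undir v v
  dir_asymm : ∀ u v, dir u v → ¬ dir v u
  dir_not_undir : ∀ u v, dir u v → ¬ undir u v
  /-- No partially directed cycle: there is no sequence `ρ 0, …, ρ n` (`n ≥ 2`)
  with `ρ n = ρ 0`, the vertices `ρ 0, …, ρ (n-1)` distinct, every consecutive
  pair joined by `dir` or `undir` (in the forward direction), and at least one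
  forward directed edge on it. -/
  no_partially_directed_cycle :
    ∀ (n : ℕ) (ρ : ℕ → V), 2 ≤ n → ρ n = ρ 0 →
      (∀ i j, i < j → j < n → ρ i ≠ ρ j) →
      (∀ i, i < n → dir (ρ i) (ρ (i+1)) ∨ undir (ρ i) (ρ (i+1))) →
      ¬ ∃ i, i < n ∧ dir (ρ i) (ρ (i+1))

namespace ChainGraph

variable {V : Type*}

/-- Two vertices are adjacent if they are joined by a directed or an undirected edge. -/
def Adj (G : ChainGraph V) (u v : V) : Prop := G.dir u v ∨ G.dir v u ∨ G.undir u v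

/-- A partially directed path from `u` to `w`: a sequence of distinct vertices,
each consecutive pair joined by a forward directed or an undirected edge, with
at least one directed edge on it. -/
def PDPath (G : ChainGraph V) (u w : V) : Prop :=
  ∃ (n : ℕ) (ρ : ℕ → V), 1 ≤ n ∧ ρ 0 = u ∧ ρ n = w ∧
    (∀ i j, i ≤ n → j ≤ n → i ≠ j → ρ i ≠ ρ j) ∧
    (∀ i, i < n → G.dir (ρ i) (ρ (i+1)) ∨ G.undir (ρ i) (ρ (i+1))) ∧
    (∃ i, i < n ∧ G.dir (ρ i) (ρ (i+1)))

/-- `an(Z)`: the set of vertices having a partially directed path to some vertex of `Z`. -/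
def anc (G : ChainGraph V) (Z : Set V) : Set V := {x | ∃ z ∈ Z, G.PDPath x z}

/-- Parents of `v`. -/
def pa (G : ChainGraph V) (v : V) : Set V := {u | G.dir u v}

/-- Children of `v`. -/
def ch (G : ChainGraph V) (v : V) : Set V := {u | G.dir v u}

/-- Neighbours of `v`. -/
def nb (G : ChainGraph V) (v : V) : Set V := {u | G.undir u v}

/-- A minimal complex `a → ρ 1 − ⋯ − ρ n ← b` (with `ρ 0 = a`, `ρ (n+1) = b`,
`n ≥ 1`): all vertices distinct, the indicated edges present, and it is an
induced subgraph, i.e. the only adjacencies among its vertices are between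
consecutive ones (in particular `a` and `b` are non-adjacent). -/
def IsMinimalComplex (G : ChainGraph V) (a b : V) (n : ℕ) (ρ : ℕ → V) : Prop :=
  1 ≤ n ∧ ρ 0 = a ∧ ρ (n+1) = b ∧
  (∀ i j, i ≤ n+1 → j ≤ n+1 → i ≠ j → ρ i ≠ ρ j) ∧
  G.dir a (ρ 1) ∧ G.dir b (ρ n) ∧
  (∀ i, 1 ≤ i → i < n → G.undir (ρ i) (ρ (i+1))) ∧
  (∀ i j, i ≤ n+1 → j ≤ n+1 → G.Adj (ρ i) (ρ j) → j = i+1 ∨ i = j+1)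

/-- Complex-spouses of `a`. -/
def csp (G : ChainGraph V) (a : V) : Set V := {b | ∃ n ρ, G.IsMinimalComplex a b n ρ}

/-- The Markov blanket of `T`: parents, neighbours, children and complex-spouses of `T`. -/
def mb (G : ChainGraph V) (T : V) : Set V := G.pa T ∪ G.nb T ∪ G.ch T ∪ G.csp T

/-- A route in `G`: a sequence of `len + 1` vertices `vtx 0, …, vtx len`
(hence nonempty), each consecutive pair joined by an edge of `G`. -/
structure Route (G : ChainGraph V) where
  len : ℕ
  vtx : ℕ → V
  link : ∀ i, i < len → G.Adj (vtx i) (vtx (i+1))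

/-- The positions `a, …, b` of the route form a section: all steps inside are
undirected edges, and the run is maximal on both sides. -/
def Route.IsSection {G : ChainGraph V} (ω : Route G) (a b : ℕ) : Prop :=
  a ≤ b ∧ b ≤ ω.len ∧
  (∀ k, a ≤ k → k < b → G.undir (ω.vtx k) (ω.vtx (k+1))) ∧
  (0 < a → ¬ G.undir (ω.vtx (a-1)) (ω.vtx a)) ∧
  (b < ω.len → ¬ G.undir (ω.vtx b) (ω.vtx (b+1)))

/-- A collider section: a section which the route enters by an arrowhead at both
ends, i.e. `vtx (a-1) → vtx a − ⋯ − vtx b ← vtx (b+1)` occurs on the route. -/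
def Route.IsColliderSection {G : ChainGraph V} (ω : Route G) (a b : ℕ) : Prop :=
  ω.IsSection a b ∧ 0 < a ∧ b < ω.len ∧
  G.dir (ω.vtx (a-1)) (ω.vtx a) ∧ G.dir (ω.vtx (b+1)) (ω.vtx b)

/-- A route is active with respect to `Z` if every collider section of it
contains a vertex of `Z ∪ an(Z)` and no vertex of any non-collider section is in `Z`. -/
def Route.Active {G : ChainGraph V} (ω : Route G) (Z : Set V) : Prop :=
  (∀ a b, ω.IsColliderSection a b → ∃ k, a ≤ k ∧ k ≤ b ∧ ω.vtx k ∈ Z ∪ G.anc Z) ∧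
  (∀ a b, ω.IsSection a b → ¬ ω.IsColliderSection a b →
    ∀ k, a ≤ k → k ≤ b → ω.vtx k ∉ Z)

/-- A route is intercepted (blocked) by `Z` if it is not active with respect to `Z`. -/
def Route.Intercepted {G : ChainGraph V} (ω : Route G) (Z : Set V) : Prop :=
  ¬ ω.Active Z

/-- `X` and `Y` are c-separated given `Z`: every route between a vertex of `X`
and a vertex of `Y` is intercepted by `Z`. -/
def CSep (G : ChainGraph V) (X Y Z : Set V) : Prop :=
  ∀ ω : Route G,
    ((ω.vtx 0 ∈ X ∧ ω.vtx ω.len ∈ Y) ∨ (ω.vtx 0 ∈ Y ∧ ω.vtx ω.len ∈ X)) →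
    ω.Intercepted Z

/-- Moral graph adjacency: distinct `u`, `v` are adjacent in `G^m` iff they are
adjacent in `G` or are complex-spouses. -/
def MoralAdj (G : ChainGraph V) (u v : V) : Prop :=
  u ≠ v ∧ (G.dir u v ∨ G.dir v u ∨ G.undir u v ∨ u ∈ G.csp v ∨ v ∈ G.csp u)

/-- A set `A` is ancestral if it contains the boundary (parents and neighbours)
of each of its elements. -/
def Ancestral (G : ChainGraph V) (A : Set V) : Prop :=
  ∀ a ∈ A, ∀ u, (G.dir u a ∨ G.undir u a) → u ∈ A

/-- `An(A)`: the smallest ancestral set containing `A`. -/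
def An (G : ChainGraph V) (A : Set V) : Set V :=
  ⋂₀ {B : Set V | A ⊆ B ∧ G.Ancestral B}

/-- A minimal complex of the induced subgraph `G_A`: a minimal complex of `G`
all of whose vertices lie in `A`. -/
def IsMinimalComplexIn (G : ChainGraph V) (A : Set V) (a b : V) (n : ℕ) (ρ : ℕ → V) : Prop :=
  G.IsMinimalComplex a b n ρ ∧ ∀ i, i ≤ n+1 → ρ i ∈ A

/-- Adjacency in the moral graph `(G_A)^m` of the induced subgraph of `G` on `A`:
distinct `u, v ∈ A` joined by an edge of `G`, or complex-spouses in `G_A`. -/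
def MoralAdjIn (G : ChainGraph V) (A : Set V) (u v : V) : Prop :=
  u ∈ A ∧ v ∈ A ∧ u ≠ v ∧
    (G.dir u v ∨ G.dir v u ∨ G.undir u v ∨
      (∃ n ρ, G.IsMinimalComplexIn A u v n ρ) ∨ (∃ n ρ, G.IsMinimalComplexIn A v u n ρ))

end ChainGraph

/-- A path from `u` to `v` in an undirected graph with adjacency relation `R`:
a sequence of `n + 1 ≥ 2` distinct vertices `ρ 0 = u, …, ρ n = v` with each
consecutive pair adjacent. -/
def UPath {V : Type*} (R : V → V → Prop) (u v : V) (n : ℕ) (ρ : ℕ → V) : Prop :=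
  1 ≤ n ∧ ρ 0 = u ∧ ρ n = v ∧
  (∀ i j, i ≤ n → j ≤ n → i ≠ j → ρ i ≠ ρ j) ∧
  (∀ i, i < n → R (ρ i) (ρ (i+1)))

end LWF

/-!
Every route leaving `T` first meets a vertex of `Mb(T)`. If that vertex lies in a non-collider
section, `Mb(T)` blocks the route. Otherwise the route begins `T → x − ⋯ − y ← w`, and `w` is
`T` again (and the argument restarts there), adjacent to `T`, or a complex-spouse of `T`: a
shortest walk of the shape `T → x − ⋯ − y ← w` is a minimal complex, since any chord of it
either shortens it or closes a partially directed cycle. In the last two cases `w ∈ Mb(T)`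
begins a non-collider section, so the route is blocked again. Hence a route active given
`Mb(T)` that starts at `T` also ends at `T`.
-/

namespace LWF

def skip {V : Type*} (ρ : ℕ → V) (i d k : ℕ) : V := if k ≤ i then ρ k else ρ (k + d)

section Skip

variable {V : Type*} {ρ : ℕ → V} {i d k : ℕ}

theorem skip_of_le (h : k ≤ i) : skip ρ i d k = ρ k := if_pos h

theorem skip_of_lt (h : i < k) : skip ρ i d k = ρ (k + d) := if_neg (Nat.not_le.2 h)

end Skip

theorem exists_walk_of_reflTransGen {V : Type*} {r : V → V → Prop} {a b : V}
    (h : Relation.ReflTransGen r a b) :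
    ∃ (m : ℕ) (ρ : ℕ → V), ρ 0 = a ∧ ρ m = b ∧ ∀ i < m, r (ρ i) (ρ (i + 1)) := by
  induction h with
  | refl => exact ⟨0, fun _ => a, rfl, rfl, fun _ h => absurd h (Nat.not_lt_zero _)⟩
  | @tail c e _ hce ih =>
    obtain ⟨m, ρ, h0, hm, hstep⟩ := ih
    refine ⟨m + 1, fun k => if k ≤ m then ρ k else e, by simp [h0], by simp, fun i hi => ?_⟩
    rcases Nat.lt_succ_iff_lt_or_eq.1 hi with hi | rfl
    · simpa [hi.le, Nat.succ_le_of_lt hi] using hstep i hi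
    · simpa [hm] using hce

namespace ChainGraph

variable {V : Type*} (G : ChainGraph V)

def PDStep (u v : V) : Prop := G.dir u v ∨ G.undir u v

variable {G}

theorem Adj.symm {u v : V} (h : G.Adj u v) : G.Adj v u := by
  rcases h with h | h | h
  · exact Or.inr (Or.inl h)
  · exact Or.inl h
  · exact Or.inr (Or.inr (G.undir_symm _ _ h))

theorem Adj.dir_or_pdStep {u v : V} (h : G.Adj u v) : G.dir u v ∨ G.PDStep v u := by
  rcases h with h | h | h
  · exact Or.inl h
  · exact Or.inr (Or.inl h)
  · exact Or.inr (Or.inr (G.undir_symm _ _ h))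

variable (G)

theorem adj_irrefl (v : V) : ¬ G.Adj v v := by
  rintro (h | h | h)
  · exact G.dir_irrefl v h
  · exact G.dir_irrefl v h
  · exact G.undir_irrefl v h

theorem reflTransGen_undir_symm {u v : V} (h : Relation.ReflTransGen G.undir u v) :
    Relation.ReflTransGen G.undir v u := by
  induction h with
  | refl => rfl
  | tail _ hbc ih => exact ih.head (G.undir_symm _ _ hbc)

theorem not_pdWalk_closed_by_dir (m : ℕ) (ρ : ℕ → V) (hstep : ∀ i < m, G.PDStep (ρ i) (ρ (i + 1)))
    (hclose : G.dir (ρ m) (ρ 0)) : False := by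
  induction m using Nat.strong_induction_on generalizing ρ with
  | _ m ih =>
  -- a repeated vertex can be cut out, so a shortest such walk is a cycle of distinct vertices
  by_cases hrep : ∃ i j, i < j ∧ j ≤ m ∧ ρ i = ρ j
  · obtain ⟨i, j, hij, hjm, hρ⟩ := hrep
    have hskip : ∀ k, i ≤ k → skip ρ i (j - i) k = ρ (k + (j - i)) := by
      intro k hk
      rcases hk.lt_or_eq with hk | rfl
      · exact skip_of_lt hk
      · rw [skip_of_le le_rfl, hρ, Nat.add_sub_cancel' hij.le]
    refine ih (m - (j - i)) (by omega) (skip ρ i (j - i)) (fun k hk => ?_) ?_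
    · rcases lt_or_ge k i with hki | hik
      · rw [skip_of_le hki.le, skip_of_le hki]
        exact hstep k (by omega)
      · rw [hskip k hik, hskip (k + 1) (by omega), Nat.add_right_comm]
        exact hstep _ (by omega)
    · rw [hskip _ (by omega), skip_of_le (Nat.zero_le _), Nat.sub_add_cancel (by omega)]
      exact hclose
  · push Not at hrep
    have hm : m ≠ 0 := by
      rintro rfl
      exact G.dir_irrefl _ hclose
    refine G.no_partially_directed_cycle (m + 1) (fun k => if k ≤ m then ρ k else ρ 0)
      (by omega) (by simp) (fun i j hij hj => ?_) (fun i hi => ?_) ⟨m, by omega, ?_⟩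
    · simpa [show i ≤ m by omega, show j ≤ m by omega] using hrep i j hij (by omega)
    · rcases Nat.lt_succ_iff_lt_or_eq.1 hi with hi | rfl
      · simpa [hi.le, Nat.succ_le_of_lt hi, PDStep] using hstep i hi
      · simpa using Or.inl hclose
    · simpa using hclose

theorem not_reflTransGen_of_dir {x y : V} (hxy : G.dir x y) :
    ¬ Relation.ReflTransGen G.PDStep y x := by
  intro h
  obtain ⟨m, ρ, h0, hm, hstep⟩ := exists_walk_of_reflTransGen h
  exact G.not_pdWalk_closed_by_dir m ρ hstep (by rwa [h0, hm])

theorem not_dir_of_reflTransGen_undir {x y : V} (h : Relation.ReflTransGen G.undir x y) :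
    ¬ G.dir x y := fun hxy =>
  G.not_reflTransGen_of_dir hxy
    (Relation.ReflTransGen.mono (fun _ _ => Or.inr) _ _ (G.reflTransGen_undir_symm h))

theorem mem_mb_of_adj {T u : V} (h : G.Adj T u) : u ∈ G.mb T := by
  rcases h with h | h | h
  · exact Or.inl (Or.inr h)
  · exact Or.inl (Or.inl (Or.inl h))
  · exact Or.inl (Or.inl (Or.inr (G.undir_symm _ _ h)))

theorem self_notMem_mb (T : V) : T ∉ G.mb T := by
  rintro (((h | h) | h) | ⟨n, ρ, h⟩)
  · exact G.dir_irrefl T h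
  · exact G.undir_irrefl T h
  · exact G.dir_irrefl T h
  · exact h.2.2.2.1 0 (n + 1) (Nat.zero_le _) le_rfl (Nat.succ_ne_zero n).symm
      (h.2.1.trans h.2.2.1.symm)

/-- A minimal complex without the requirements that its vertices be distinct and that it be
an induced subgraph. -/
structure IsComplexWalk (a b : V) (n : ℕ) (ρ : ℕ → V) : Prop where
  one_le : 1 ≤ n
  first : ρ 0 = a
  last : ρ (n + 1) = b
  dir_first : G.dir a (ρ 1)
  dir_last : G.dir b (ρ n)
  undir : ∀ i, 1 ≤ i → i < n → G.undir (ρ i) (ρ (i + 1))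

namespace IsComplexWalk

variable {G} {a b : V} {n : ℕ} {ρ : ℕ → V}

theorem adj (h : G.IsComplexWalk a b n ρ) {i : ℕ} (hi : i ≤ n) : G.Adj (ρ i) (ρ (i + 1)) := by
  rcases Nat.eq_zero_or_pos i with rfl | hi₀
  · rw [h.first]
    exact Or.inl h.dir_first
  rcases hi.lt_or_eq with hi | rfl
  · exact Or.inr (Or.inr (h.undir i hi₀ hi))
  · rw [h.last]
    exact Or.inr (Or.inl h.dir_last)

theorem reflTransGen_undir (h : G.IsComplexWalk a b n ρ) {i j : ℕ} (hi : 1 ≤ i) (hin : i ≤ n)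
    (hj : 1 ≤ j) (hjn : j ≤ n) : Relation.ReflTransGen G.undir (ρ i) (ρ j) := by
  have from_one : ∀ k, 1 ≤ k → k ≤ n → Relation.ReflTransGen G.undir (ρ 1) (ρ k) := by
    intro k hk
    induction k, hk using Nat.le_induction with
    | base => exact fun _ => .refl
    | succ k hk ih => exact fun hkn => (ih (by omega)).tail (h.undir k hk (by omega))
  exact (G.reflTransGen_undir_symm (from_one i hi hin)).trans (from_one j hj hjn)

theorem shortcut (h : G.IsComplexWalk a b n ρ) {i j : ℕ} (hij : i + 2 ≤ j) (hj : j ≤ n + 1)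
    (hne : 1 ≤ i ∨ j ≤ n) (ha : i = 0 → G.dir a (ρ j)) (hb : j = n + 1 → G.dir b (ρ i))
    (hu : 1 ≤ i → j ≤ n → G.undir (ρ i) (ρ j)) :
    G.IsComplexWalk a b (n - (j - i - 1)) (skip ρ i (j - i - 1)) where
  one_le := by omega
  first := by rw [skip_of_le (Nat.zero_le i), h.first]
  last := by rw [skip_of_lt (by omega), ← h.last]; congr 1; omega
  dir_first := by
    rcases Nat.eq_zero_or_pos i with rfl | hi
    · rw [skip_of_lt Nat.zero_lt_one, show 1 + (j - 0 - 1) = j by omega]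
      exact ha rfl
    · rw [skip_of_le hi]
      exact h.dir_first
  dir_last := by
    rcases (show j ≤ n ∨ j = n + 1 by omega) with hjn | rfl
    · rw [skip_of_lt (by omega), Nat.sub_add_cancel (by omega)]
      exact h.dir_last
    · rw [show n - (n + 1 - i - 1) = i by omega, skip_of_le le_rfl]
      exact hb rfl
  undir k hk hk' := by
    rcases lt_trichotomy k i with hki | rfl | hki
    · rw [skip_of_le hki.le, skip_of_le hki]
      exact h.undir k hk (by omega)
    · rw [skip_of_le le_rfl, skip_of_lt (Nat.lt_succ_self k), show k + 1 + (j - k - 1) = j by omega]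
      exact hu hk (by omega)
    · rw [skip_of_lt hki, skip_of_lt (by omega), Nat.add_right_comm]
      exact h.undir _ (by omega) (by omega)

/-- A chord either gives a shorter complex walk or closes a partially directed cycle. -/
theorem not_adj_of_minimal (h : G.IsComplexWalk a b n ρ)
    (hmin : ∀ m ρ', G.IsComplexWalk a b m ρ' → n ≤ m) (hab : ¬ G.Adj a b) {i j : ℕ}
    (hij : i + 2 ≤ j) (hj : j ≤ n + 1) : ¬ G.Adj (ρ i) (ρ j) := by
  intro hadj
  have pd : ∀ {k l}, 1 ≤ k → k ≤ n → 1 ≤ l → l ≤ n →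
      Relation.ReflTransGen G.PDStep (ρ k) (ρ l) := fun hk hkn hl hln =>
    Relation.ReflTransGen.mono (fun _ _ => Or.inr) _ _ (h.reflTransGen_undir hk hkn hl hln)
  rcases Nat.eq_zero_or_pos i with rfl | hi <;>
    rcases (show j ≤ n ∨ j = n + 1 by omega) with hjn | rfl
  · rw [h.first] at hadj
    rcases hadj.dir_or_pdStep with hd | hd
    · have := hmin _ _ (h.shortcut hij hj (Or.inr hjn) (fun _ => hd) (fun e => absurd e (by omega))
        (fun e => absurd e (by omega)))
      omega
    · exact G.not_reflTransGen_of_dir h.dir_first ((pd le_rfl h.one_le (by omega) hjn).tail hd)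
  · rw [h.first, h.last] at hadj
    exact hab hadj
  · rcases hadj with hd | hd | hd
    · exact G.not_dir_of_reflTransGen_undir (h.reflTransGen_undir hi (by omega) (by omega) hjn) hd
    · exact G.not_dir_of_reflTransGen_undir (h.reflTransGen_undir (by omega) hjn hi (by omega)) hd
    · have := hmin _ _ (h.shortcut hij hj (Or.inl hi) (fun e => absurd e (by omega))
        (fun e => absurd e (by omega)) (fun _ _ => hd))
      omega
  · rw [h.last] at hadj
    rcases hadj.symm.dir_or_pdStep with hd | hd
    · have := hmin _ _ (h.shortcut hij hj (Or.inl hi) (fun e => absurd e (by omega)) (fun _ => hd)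
        (fun _ e => absurd e (by omega)))
      omega
    · exact G.not_reflTransGen_of_dir h.dir_last ((pd h.one_le le_rfl hi (by omega)).tail hd)

theorem isMinimalComplex_of_minimal (h : G.IsComplexWalk a b n ρ)
    (hmin : ∀ m ρ', G.IsComplexWalk a b m ρ' → n ≤ m) (hne : a ≠ b) (hab : ¬ G.Adj a b) :
    G.IsMinimalComplex a b n ρ := by
  have far := fun {i j} => h.not_adj_of_minimal hmin hab (i := i) (j := j)
  -- a repeated vertex `ρ i = ρ j` turns the edge at `ρ j` into a chord at `ρ i`
  have inj : ∀ i j, i < j → j ≤ n + 1 → ρ i ≠ ρ j := by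
    intro i j hij hj hρ
    rcases (show j ≤ n ∨ j = n + 1 by omega) with hjn | rfl
    · exact far (by omega) (by omega) (hρ ▸ h.adj hjn)
    · rcases Nat.eq_zero_or_pos i with rfl | hi
      · exact hne (h.first ▸ h.last ▸ hρ)
      · have hadj := h.adj (i := i - 1) (by omega)
        rw [Nat.sub_add_cancel hi, hρ] at hadj
        exact far (by omega) le_rfl hadj
  refine ⟨h.one_le, h.first, h.last, fun i j hi hj hij => ?_, h.dir_first, h.dir_last, h.undir,
    fun i j hi hj hadj => ?_⟩
  · rcases Nat.lt_or_gt_of_ne hij with hlt | hlt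
    · exact inj i j hlt hj
    · exact (inj j i hlt hi).symm
  · by_contra hcon
    rcases lt_trichotomy i j with hlt | rfl | hlt
    · exact far (by omega) hj hadj
    · exact G.adj_irrefl _ hadj
    · exact far (by omega) hi hadj.symm

end IsComplexWalk

theorem mem_csp_of_isComplexWalk {a b : V} {n : ℕ} {ρ : ℕ → V} (h : G.IsComplexWalk a b n ρ)
    (hne : a ≠ b) (hab : ¬ G.Adj a b) : b ∈ G.csp a := by
  classical
  have hex : ∃ n ρ, G.IsComplexWalk a b n ρ := ⟨n, ρ, h⟩
  obtain ⟨ρ₀, h₀⟩ := Nat.find_spec hex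
  exact ⟨_, ρ₀, h₀.isMinimalComplex_of_minimal
    (fun m ρ' h' => Nat.find_min' hex ⟨ρ', h'⟩) hne hab⟩

namespace Route

variable {G : ChainGraph V} (ω : Route G)

def reverse : Route G where
  len := ω.len
  vtx i := ω.vtx (ω.len - i)
  link i hi := by
    have := (ω.link (ω.len - (i + 1)) (by omega)).symm
    rwa [show ω.len - (i + 1) + 1 = ω.len - i by omega] at this

@[simp] theorem reverse_len : ω.reverse.len = ω.len := rfl

@[simp] theorem reverse_vtx (i : ℕ) : ω.reverse.vtx i = ω.vtx (ω.len - i) := rfl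

theorem isSection_reverse_iff {a b : ℕ} (hab : a ≤ b) (hb : b ≤ ω.len) :
    ω.reverse.IsSection a b ↔ ω.IsSection (ω.len - b) (ω.len - a) := by
  simp only [IsSection, reverse_len, reverse_vtx]
  constructor
  · rintro ⟨-, -, hrun, hl, hr⟩
    refine ⟨by omega, by omega, fun k hk hk' => ?_, fun h hu => hr (by omega) ?_,
      fun h hu => hl (by omega) ?_⟩
    · have := hrun (ω.len - k - 1) (by omega) (by omega)
      rw [show ω.len - (ω.len - k - 1) = k + 1 by omega,
        show ω.len - (ω.len - k - 1 + 1) = k by omega] at this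
      exact G.undir_symm _ _ this
    · rw [show ω.len - (b + 1) = ω.len - b - 1 by omega]
      exact G.undir_symm _ _ hu
    · rw [show ω.len - (a - 1) = ω.len - a + 1 by omega]
      exact G.undir_symm _ _ hu
  · rintro ⟨-, -, hrun, hl, hr⟩
    refine ⟨hab, hb, fun k hk hk' => ?_, fun h hu => hr (by omega) ?_,
      fun h hu => hl (by omega) ?_⟩
    · have := hrun (ω.len - k - 1) (by omega) (by omega)
      rw [show ω.len - k - 1 + 1 = ω.len - k by omega,
        show ω.len - k - 1 = ω.len - (k + 1) by omega] at this
      exact G.undir_symm _ _ this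
    · rw [show ω.len - a + 1 = ω.len - (a - 1) by omega]
      exact G.undir_symm _ _ hu
    · rw [show ω.len - b - 1 = ω.len - (b + 1) by omega]
      exact G.undir_symm _ _ hu

theorem isColliderSection_reverse_iff {a b : ℕ} (hab : a ≤ b) (hb : b ≤ ω.len) :
    ω.reverse.IsColliderSection a b ↔ ω.IsColliderSection (ω.len - b) (ω.len - a) := by
  simp only [IsColliderSection, ω.isSection_reverse_iff hab hb, reverse_len, reverse_vtx]
  constructor
  · rintro ⟨hs, ha, hbl, hin, hout⟩
    refine ⟨hs, by omega, by omega, ?_, ?_⟩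
    · rwa [show ω.len - b - 1 = ω.len - (b + 1) by omega]
    · rwa [show ω.len - a + 1 = ω.len - (a - 1) by omega]
  · rintro ⟨hs, ha, hbl, hin, hout⟩
    refine ⟨hs, by omega, by omega, ?_, ?_⟩
    · rwa [show ω.len - (a - 1) = ω.len - a + 1 by omega]
    · rwa [show ω.len - (b + 1) = ω.len - b - 1 by omega]

theorem exists_isSection {p : ℕ} (hp : p ≤ ω.len)
    (hleft : 0 < p → ¬ G.undir (ω.vtx (p - 1)) (ω.vtx p)) :
    ∃ b, p ≤ b ∧ ω.IsSection p b := by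
  classical
  let Run : ℕ → Prop := fun b => ∀ k, p ≤ k → k < b → G.undir (ω.vtx k) (ω.vtx (k + 1))
  have hrun_p : Run p := fun k hk hk' => absurd hk' (Nat.not_lt.2 hk)
  set b := Nat.findGreatest Run ω.len
  have hrun : Run b := Nat.findGreatest_spec hp hrun_p
  refine ⟨b, Nat.le_findGreatest hp hrun_p, Nat.le_findGreatest hp hrun_p,
    Nat.findGreatest_le _, hrun, hleft, fun hb hu => ?_⟩
  have hrun' : Run (b + 1) := fun k hk hk' =>
    (Nat.lt_succ_iff_lt_or_eq.1 hk').elim (hrun k hk) (fun e => e ▸ hu)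
  have := Nat.le_findGreatest (P := Run) hb hrun'
  omega

theorem not_isColliderSection_of_dir {a b : ℕ} (h : 0 < a → G.dir (ω.vtx a) (ω.vtx (a - 1))) :
    ¬ ω.IsColliderSection a b :=
  fun ⟨_, ha, _, hin, _⟩ => G.dir_asymm _ _ hin (h ha)

theorem mem_mb_of_isColliderSection {T : V} {p b : ℕ} (hcol : ω.IsColliderSection (p + 1) b)
    (hT : ω.vtx p = T) (hne : ω.vtx (b + 1) ≠ T) : ω.vtx (b + 1) ∈ G.mb T := by
  obtain ⟨⟨hpb, -, hrun, -, -⟩, -, -, hin, hout⟩ := hcol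
  rw [Nat.add_sub_cancel] at hin
  by_cases hadj : G.Adj T (ω.vtx (b + 1))
  · exact G.mem_mb_of_adj hadj
  refine Or.inr (G.mem_csp_of_isComplexWalk (n := b - p) (ρ := fun k => ω.vtx (p + k))
    ⟨by omega, hT, ?_, hT ▸ hin, ?_, fun k hk hk' => ?_⟩ hne.symm hadj)
  · rw [show p + (b - p + 1) = b + 1 by omega]
  · rwa [show p + (b - p) = b by omega]
  · rw [← Nat.add_assoc]
    exact hrun _ (by omega) (by omega)

variable {ω}

theorem Active.reverse {Z : Set V} (h : ω.Active Z) : ω.reverse.Active Z := by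
  refine ⟨fun a b hc => ?_, fun a b hs hnc k hak hkb => ?_⟩
  · have hab := hc.1.1
    have hb : b ≤ ω.len := hc.1.2.1
    obtain ⟨k, hk, hk', hZ⟩ := h.1 _ _ ((ω.isColliderSection_reverse_iff hab hb).1 hc)
    exact ⟨ω.len - k, by omega, by omega, by rwa [reverse_vtx, Nat.sub_sub_self (by omega)]⟩
  · have hab := hs.1
    have hb : b ≤ ω.len := hs.2.1
    exact h.2 _ _ ((ω.isSection_reverse_iff hab hb).1 hs)
      (fun hc => hnc ((ω.isColliderSection_reverse_iff hab hb).2 hc)) (ω.len - k)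
      (by omega) (by omega)

theorem Active.vtx_len_eq_of_start {T : V} (hact : ω.Active (G.mb T)) {p : ℕ} (hp : p ≤ ω.len)
    (hT : ω.vtx p = T) (hstart : 0 < p → G.dir (ω.vtx p) (ω.vtx (p - 1))) :
    ω.vtx ω.len = T := by
  induction hd : ω.len - p using Nat.strong_induction_on generalizing p with
  | _ d ih =>
  rcases hp.lt_or_eq with hp | rfl
  swap
  · exact hT
  have hnext : ω.vtx (p + 1) ∈ G.mb T := G.mem_mb_of_adj (hT ▸ ω.link p hp)
  have hleft : 0 < p → ¬ G.undir (ω.vtx (p - 1)) (ω.vtx p) := fun h hu =>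
    G.dir_not_undir _ _ (hstart h) (G.undir_symm _ _ hu)
  by_cases hu : G.undir (ω.vtx p) (ω.vtx (p + 1))
  · obtain ⟨b, -, hsec⟩ := ω.exists_isSection hp.le hleft
    have hb : p + 1 ≤ b := by
      by_contra hb
      exact hsec.2.2.2.2 (by omega) (by rwa [show b = p by have := hsec.1; omega])
    exact (hact.2 p b hsec (ω.not_isColliderSection_of_dir hstart) (p + 1) (by omega) hb
      hnext).elim
  obtain ⟨b, hpb, hsec⟩ := ω.exists_isSection hp (fun _ => hu)
  by_cases hcol : ω.IsColliderSection (p + 1) b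
  swap
  · exact (hact.2 (p + 1) b hsec hcol (p + 1) le_rfl hpb hnext).elim
  have hblen := hcol.2.2.1
  have hout := hcol.2.2.2.2
  have hstart' : 0 < b + 1 → G.dir (ω.vtx (b + 1)) (ω.vtx (b + 1 - 1)) := fun _ => hout
  by_cases hbT : ω.vtx (b + 1) = T
  · exact ih _ (by omega) hblen hbT hstart' rfl
  have hmb := ω.mem_mb_of_isColliderSection hcol hT hbT
  obtain ⟨c, hc, hsec'⟩ := ω.exists_isSection hblen fun _ hu' =>
    G.dir_not_undir _ _ hout (G.undir_symm _ _ hu')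
  exact (hact.2 (b + 1) c hsec' (ω.not_isColliderSection_of_dir hstart') (b + 1) le_rfl hc
    hmb).elim

theorem Active.vtx_len_eq {T : V} (hact : ω.Active (G.mb T)) (h0 : ω.vtx 0 = T) :
    ω.vtx ω.len = T :=
  hact.vtx_len_eq_of_start (Nat.zero_le _) h0 (fun h => absurd h (lt_irrefl 0))

theorem Active.vtx_zero_eq {T : V} (hact : ω.Active (G.mb T)) (hlen : ω.vtx ω.len = T) :
    ω.vtx 0 = T := by
  simpa using hact.reverse.vtx_len_eq (by simpa using hlen)

end Route

end ChainGraph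

/-- The distribution `P` enters only through its conditional-independence relation `CI`;
`hGMP` is the global Markov property. -/
theorem markovBlanket_condIndep_general {V : Type*} (G : ChainGraph V)
    (CI : Set V → Set V → Set V → Prop)
    (hGMP : ∀ A B S : Set V, Disjoint A B → Disjoint A S → Disjoint B S →
      G.CSep A B S → CI A B S)
    (T : V) :
    CI {T} (Set.univ \ ({T} ∪ G.mb T)) (G.mb T) := by
  refine hGMP _ _ _ (Set.disjoint_singleton_left.2 fun h => h.2 (Or.inl rfl))
    (Set.disjoint_singleton_left.2 (G.self_notMem_mb T))
    (Set.disjoint_left.2 fun _ hx hmb => hx.2 (Or.inr hmb)) ?_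
  rintro ω (⟨h0, hlen⟩ | ⟨h0, hlen⟩) hact
  · exact hlen.2 (Or.inl (hact.vtx_len_eq h0))
  · exact h0.2 (Or.inl (hact.vtx_zero_eq hlen))

/-- If a joint distribution `P` over variables indexed by `V`
satisfies the global Markov property with respect to the LWF chain graph `G`
(here abstracted by a conditional-independence relation `CI` on sets of
variables such that c-separation implies conditional independence for disjoint
sets), then `T` is conditionally independent of `V ∖ ({T} ∪ Mb(T))` given `Mb(T)`. -/
theorem markovBlanket_condIndep {V : Type*} [Fintype V] (G : ChainGraph V)
    (CI : Set V → Set V → Set V → Prop)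
    (hGMP : ∀ A B S : Set V, Disjoint A B → Disjoint A S → Disjoint B S →
      G.CSep A B S → CI A B S)
    (T : V) :
    CI {T} (Set.univ \ ({T} ∪ G.mb T)) (G.mb T) :=
  markovBlanket_condIndep_general G CI hGMP T

end LWF
end

section
/- Let u→w−⋯−z←v be a minimal complex in an LWF chain graph G. Then u and v are non-adjacent in G, and for every set Z ⊆ V∖{u,v} that c-separates u and v, the set Z∪{w} does not c-separate u and v. -/
namespace LWF

namespace ChainGraph

variable {V : Type*} {G : ChainGraph V}

theorem not_cSep_singleton_of_active {Z : Set V} (ω : G.Route) (hω : ω.Active Z) :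
    ¬ G.CSep {ω.vtx 0} {ω.vtx ω.len} Z :=
  fun hsep => hsep ω (Or.inl ⟨rfl, rfl⟩) hω

namespace IsMinimalComplex

variable {a b : V} {n : ℕ} {ρ : ℕ → V}

theorem not_adj (hc : G.IsMinimalComplex a b n ρ) : ¬ G.Adj a b := by
  obtain ⟨hn, h0, hN, -, -, -, -, hind⟩ := hc
  intro hab
  rcases hind 0 (n+1) (by omega) le_rfl (by rwa [h0, hN]) with h | h <;> omega

theorem not_undir_zero_one (hc : G.IsMinimalComplex a b n ρ) : ¬ G.undir (ρ 0) (ρ 1) := by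
  obtain ⟨-, h0, -, -, hda, -⟩ := hc
  rw [h0]
  exact G.dir_not_undir _ _ hda

theorem not_undir_last (hc : G.IsMinimalComplex a b n ρ) : ¬ G.undir (ρ n) (ρ (n+1)) := by
  obtain ⟨-, -, hN, -, -, hdb, -⟩ := hc
  rw [hN]
  exact fun h => G.dir_not_undir _ _ hdb (G.undir_symm _ _ h)

theorem adj_succ (hc : G.IsMinimalComplex a b n ρ) (i : ℕ) (hi : i < n + 1) :
    G.Adj (ρ i) (ρ (i+1)) := by
  obtain ⟨-, h0, hN, -, hda, hdb, hund, -⟩ := hc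
  rcases Nat.eq_zero_or_pos i with rfl | hpos
  · exact Or.inl (h0 ▸ hda)
  rcases Nat.lt_or_ge i n with hlt | hge
  · exact Or.inr (Or.inr (hund i hpos hlt))
  · obtain rfl : i = n := by omega
    exact Or.inr (Or.inl (hN ▸ hdb))

@[simps]
def route (hc : G.IsMinimalComplex a b n ρ) : G.Route := ⟨n + 1, ρ, hc.adj_succ⟩

theorem isSection_route (hc : G.IsMinimalComplex a b n ρ) {i j : ℕ}
    (hs : hc.route.IsSection i j) :
    (i = 0 ∧ j = 0) ∨ (i = 1 ∧ j = n) ∨ (i = n + 1 ∧ j = n + 1) := by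
  obtain ⟨hn, -, -, -, -, -, hund, -⟩ := id hc
  obtain ⟨hij, hj, hin, hleft, hright⟩ := hs
  simp only [route_len, route_vtx] at hj hin hleft hright
  rcases Nat.eq_zero_or_pos i with rfl | hpos
  · refine Or.inl ⟨rfl, ?_⟩
    by_contra hj0
    exact hc.not_undir_zero_one (hin 0 le_rfl (by omega))
  rcases Nat.lt_or_ge i (n+1) with hlt | hge
  · have hi1 : i = 1 := by
      by_contra hi1
      have hstep := hund (i-1) (by omega) (by omega)
      rw [Nat.sub_add_cancel hpos] at hstep
      exact hleft hpos hstep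
    subst hi1
    refine Or.inr (Or.inl ⟨rfl, ?_⟩)
    have hj_ne : j ≠ n + 1 := by
      rintro rfl
      exact hc.not_undir_last (hin n hn (by omega))
    have hj_ge : n ≤ j := by
      by_contra hjn
      exact hright (by omega) (hund j (by omega) (by omega))
    omega
  · exact Or.inr (Or.inr ⟨by omega, by omega⟩)

theorem isColliderSection_route (hc : G.IsMinimalComplex a b n ρ) :
    hc.route.IsColliderSection 1 n := by
  obtain ⟨hn, h0, hN, -, hda, hdb, hund, -⟩ := id hc
  refine ⟨⟨hn, by simp, hund, fun _ => hc.not_undir_zero_one, fun _ => hc.not_undir_last⟩,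
    Nat.one_pos, by simp, ?_, ?_⟩
  · simpa [h0] using hda
  · simpa [hN] using hdb

theorem route_active (hc : G.IsMinimalComplex a b n ρ) {Z : Set V} (ha : a ∉ Z) (hb : b ∉ Z)
    (hmid : ∃ k, 1 ≤ k ∧ k ≤ n ∧ ρ k ∈ Z ∪ G.anc Z) : hc.route.Active Z := by
  obtain ⟨-, h0, hN, -⟩ := id hc
  constructor
  · intro i j hcol
    rcases hc.isSection_route hcol.1 with ⟨rfl, -⟩ | ⟨rfl, rfl⟩ | ⟨-, rfl⟩
    · exact absurd hcol.2.1 (lt_irrefl 0)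
    · exact hmid
    · exact absurd hcol.2.2.1 (by simp)
  · intro i j hs hnc k hik hkj
    rcases hc.isSection_route hs with ⟨rfl, rfl⟩ | ⟨rfl, rfl⟩ | ⟨rfl, rfl⟩
    · obtain rfl : k = 0 := by omega
      simpa [h0] using ha
    · exact absurd hc.isColliderSection_route hnc
    · obtain rfl : k = n + 1 := by omega
      simpa [hN] using hb

end IsMinimalComplex

end ChainGraph

theorem minimalComplex_unblock_general {V : Type*} (G : ChainGraph V)
    (u v : V) (n : ℕ) (ρ : ℕ → V) (hc : G.IsMinimalComplex u v n ρ) :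
    ¬ G.Adj u v ∧
    ∀ Z : Set V, u ∉ Z → v ∉ Z → G.CSep {u} {v} Z →
      ¬ G.CSep {u} {v} (Z ∪ {ρ 1}) := by
  refine ⟨hc.not_adj, fun Z huZ hvZ _ => ?_⟩
  obtain ⟨hn, h0, hN, hdist, -⟩ := id hc
  have hw_ne_u : u ≠ ρ 1 := h0 ▸ hdist 0 1 (by omega) (by omega) (by omega)
  have hw_ne_v : v ≠ ρ 1 := hN ▸ hdist (n+1) 1 le_rfl (by omega) (by omega)
  have hactive := hc.route_active (Z := Z ∪ {ρ 1}) (by simp [huZ, hw_ne_u])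
    (by simp [hvZ, hw_ne_v]) ⟨1, le_rfl, hn, Or.inl (Or.inr rfl)⟩
  simpa [h0, hN] using ChainGraph.not_cSep_singleton_of_active hc.route hactive

/-- Let `u → w − ⋯ − z ← v` (with `w = ρ 1`) be a minimal
complex in an LWF chain graph `G`. Then `u` and `v` are non-adjacent in `G`,
and for every set `Z ⊆ V ∖ {u, v}` that c-separates `u` and `v`, the set
`Z ∪ {w}` does not c-separate `u` and `v`. -/
theorem minimalComplex_unblock {V : Type*} [Fintype V] (G : ChainGraph V)
    (u v : V) (n : ℕ) (ρ : ℕ → V) (hc : G.IsMinimalComplex u v n ρ) :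
    ¬ G.Adj u v ∧
    ∀ Z : Set V, u ∉ Z → v ∉ Z → G.CSep {u} {v} Z →
      ¬ G.CSep {u} {v} (Z ∪ {ρ 1}) :=
  minimalComplex_unblock_general G u v n ρ hc

end LWF
end

section
/- Let u and v be distinct non-adjacent vertices of an LWF chain graph G. Then u and v are non-adjacent in the moral graph (G_{An({u,v})})^m of the induced subgraph of G on the smallest ancestral set An({u,v}); in particular, there is no minimal complex u→w_1−⋯−w_r←v of G all of whose vertices lie in An({u,v}). -/
/-! Every vertex of `An({a, b})` reaches `a` or `b` by a walk whose edges are directed or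
undirected edges traversed forwards. If `ρ 1` lies in `An({a, b})` for a minimal complex
`a → ρ 1 − ⋯ − ρ n ← b`, such a walk closes up either `a → ρ 1 ⇝ a` or
`b → ρ n − ⋯ − ρ 1 ⇝ b`, and a shortest walk closing a directed edge has distinct vertices,
so it is a partially directed cycle. -/

namespace Relation.ReflTransGen

variable {α : Type*} {r : α → α → Prop} {a b : α}

theorem exists_walk (h : ReflTransGen r a b) :
    ∃ (n : ℕ) (σ : ℕ → α), σ 0 = a ∧ σ n = b ∧ ∀ i < n, r (σ i) (σ (i + 1)) := by
  induction h with
  | refl => exact ⟨0, fun _ => a, rfl, rfl, fun i hi => absurd hi (Nat.not_lt_zero i)⟩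
  | @tail c d _ hcd ih =>
    obtain ⟨n, σ, h0, hn, hs⟩ := ih
    refine ⟨n + 1, fun t => if t ≤ n then σ t else d, by simpa using h0, by simp, ?_⟩
    intro i hi
    rcases Nat.lt_or_ge i n with hin | hin
    · simpa [hin.le, Nat.succ_le_of_lt hin] using hs i hin
    · obtain rfl : i = n := by omega
      simpa [hn] using hcd

theorem exists_walk_of_cut {n i j : ℕ} {σ : ℕ → α} (hs : ∀ k < n, r (σ k) (σ (k + 1)))
    (hij : i < j) (hjn : j ≤ n) (heq : σ i = σ j) :
    ∃ τ : ℕ → α, τ 0 = σ 0 ∧ τ (n - (j - i)) = σ n ∧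
      ∀ k < n - (j - i), r (τ k) (τ (k + 1)) := by
  refine ⟨fun t => if t ≤ i then σ t else σ (t + (j - i)), by simp, ?_, ?_⟩
  · by_cases hj : j = n
    · subst hj
      simp [show j - (j - i) = i by omega, heq]
    · simp [show ¬ n - (j - i) ≤ i by omega, show n - (j - i) + (j - i) = n by omega]
  · intro k hk
    rcases Nat.lt_trichotomy k i with hki | rfl | hki
    · simpa [hki.le, Nat.succ_le_of_lt hki] using hs k (by omega)
    · simpa [heq, show k + 1 + (j - k) = j + 1 by omega] using hs j (by omega)
    · simpa [show ¬ k ≤ i by omega, show ¬ k + 1 ≤ i by omega,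
        show k + 1 + (j - i) = k + (j - i) + 1 by omega] using hs (k + (j - i)) (by omega)

theorem exists_injective_walk (h : ReflTransGen r a b) :
    ∃ (n : ℕ) (σ : ℕ → α), σ 0 = a ∧ σ n = b ∧ (∀ i < n, r (σ i) (σ (i + 1))) ∧
      ∀ i j, i < j → j ≤ n → σ i ≠ σ j := by
  classical
  have hwalk := h.exists_walk
  obtain ⟨σ, h0, hn, hs⟩ := Nat.find_spec hwalk
  refine ⟨Nat.find hwalk, σ, h0, hn, hs, fun i j hij hjn heq => ?_⟩
  obtain ⟨τ, hτ0, hτn, hτs⟩ := exists_walk_of_cut hs hij hjn heq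
  exact Nat.find_min hwalk (by omega) ⟨τ, hτ0.trans h0, hτn.trans hn, hτs⟩

end Relation.ReflTransGen

namespace LWF

namespace ChainGraph

open Relation

variable {V : Type*} (G : ChainGraph V)

def Step (x y : V) : Prop := G.dir x y ∨ G.undir x y

theorem not_reflTransGen_step_of_dir {a b : V} (hab : G.dir a b) :
    ¬ ReflTransGen G.Step b a := by
  intro h
  obtain ⟨n, σ, h0, hn, hs, hinj⟩ := h.exists_injective_walk
  have hn0 : n ≠ 0 := by
    rintro rfl
    exact G.dir_irrefl a (by rwa [← h0, hn] at hab)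
  refine G.no_partially_directed_cycle (n + 1) (fun t => if t ≤ n then σ t else b) (by omega)
    (by simp [h0]) ?_ ?_ ⟨n, by omega, by simpa [hn] using hab⟩
  · intro i j hij hjn
    simpa [show i ≤ n by omega, show j ≤ n by omega] using hinj i j hij (by omega)
  · intro i hi
    rcases Nat.lt_or_ge i n with hin | hin
    · simpa [Step, hin.le, Nat.succ_le_of_lt hin] using hs i hin
    · obtain rfl : i = n := by omega
      simpa [hn] using Or.inl hab

theorem exists_reflTransGen_step_of_mem_An {Z : Set V} {x : V} (hx : x ∈ G.An Z) :
    ∃ z ∈ Z, ReflTransGen G.Step x z :=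
  hx {x | ∃ z ∈ Z, ReflTransGen G.Step x z}
    ⟨fun z hz => ⟨z, hz, .refl⟩, fun _ ⟨z, hz, haz⟩ _ hw => ⟨z, hz, .head hw haz⟩⟩

variable {G} {a b : V} {n : ℕ} {ρ : ℕ → V}

theorem IsMinimalComplex.reflTransGen_step_last_first (h : G.IsMinimalComplex a b n ρ) :
    ReflTransGen G.Step (ρ n) (ρ 1) := by
  obtain ⟨hn, -, -, -, -, -, hundir, -⟩ := h
  exact (reflTransGen_of_succ_of_ge (fun i j => G.Step (ρ i) (ρ j))
    (fun i hi => Or.inr (G.undir_symm _ _ (hundir i hi.1 hi.2))) hn).lift ρ fun _ _ => id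

theorem IsMinimalComplex.not_reflTransGen_step_first (h : G.IsMinimalComplex a b n ρ)
    {z : V} (hz : z ∈ ({a, b} : Set V)) : ¬ ReflTransGen G.Step (ρ 1) z := by
  obtain ⟨-, -, -, -, ha, hb, -, -⟩ := id h
  rcases hz with rfl | rfl
  · exact G.not_reflTransGen_step_of_dir ha
  · exact fun h1 => G.not_reflTransGen_step_of_dir hb (h.reflTransGen_step_last_first.trans h1)

theorem not_isMinimalComplexIn_An_pair : ¬ G.IsMinimalComplexIn (G.An {a, b}) a b n ρ := by
  rintro ⟨h, hmem⟩
  obtain ⟨z, hz, hρz⟩ := G.exists_reflTransGen_step_of_mem_An (hmem 1 (by omega))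
  exact h.not_reflTransGen_step_first hz hρz

end ChainGraph

theorem nonadj_nonadj_moral_an_general {V : Type*} (G : ChainGraph V)
    (u v : V) (hna : ¬ G.Adj u v) :
    ¬ G.MoralAdjIn (G.An {u, v}) u v ∧
    ¬ ∃ (n : ℕ) (ρ : ℕ → V), G.IsMinimalComplexIn (G.An {u, v}) u v n ρ := by
  refine ⟨?_, fun ⟨_, _, h⟩ => ChainGraph.not_isMinimalComplexIn_An_pair h⟩
  rintro ⟨-, -, -, h | h | h | ⟨_, _, h⟩ | ⟨_, _, h⟩⟩
  · exact hna (Or.inl h)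
  · exact hna (Or.inr (Or.inl h))
  · exact hna (Or.inr (Or.inr h))
  · exact ChainGraph.not_isMinimalComplexIn_An_pair h
  · rw [Set.pair_comm] at h
    exact ChainGraph.not_isMinimalComplexIn_An_pair h

/-- If `u` and `v` are distinct non-adjacent vertices of an
LWF chain graph `G`, then `u` and `v` are non-adjacent in the moral graph
`(G_{An({u,v})})^m` of the induced subgraph of `G` on the smallest ancestral
set `An({u,v})`; in particular there is no minimal complex
`u → w₁ − ⋯ − w_r ← v` of `G` all of whose vertices lie in `An({u,v})`. -/
theorem nonadj_nonadj_moral_an {V : Type*} [Fintype V] (G : ChainGraph V)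
    (u v : V) (huv : u ≠ v) (hna : ¬ G.Adj u v) :
    ¬ G.MoralAdjIn (G.An {u, v}) u v ∧
    ¬ ∃ (n : ℕ) (ρ : ℕ → V), G.IsMinimalComplexIn (G.An {u, v}) u v n ρ :=
  nonadj_nonadj_moral_an_general G u v hna

end LWF
end
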